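/- arXiv:2107.03527 — 3 statements merged into one kernel-verified Lean document; each statement's English description precedes it below -/
import Mathlib

section
/- Let G be a graph, M a maximum matching of G witnessed by the Tutte–Berge formula, and let S* be a set of maximum cardinality achieving the minimum of n + |S| − o(G−S) over all S ⊆ V(G). Then every odd component of G − S* that is a tree consists of a single vertex. -/
/-!
Suppose a tree component of `G - S` has more than one vertex. Then it has a leaf `u`, whose only
neighbour outside `S` is some `v`. Moving `v` into `S` keeps every odd component of `G - S` other
than the one of `v`, and makes `{u}` a new odd component, so the number of odd components does not
drop; since the number of vertices outside `S` drops by one, that number changes parity, so it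
grows by at least one. Hence `S ∪ {v}` also attains the minimum of `n + |S| - o(G - S)`,
contradicting the maximality of `|S|`.
-/

noncomputable def oddComp {W : Type*} (H : SimpleGraph W) : ℕ :=
  {c : H.ConnectedComponent | Odd c.supp.ncard}.ncard

namespace SimpleGraph

variable {V : Type*} {G : SimpleGraph V}

lemma ConnectedComponent.supp_eq_singleton_of_forall_not_adj {v : V} (hv : ∀ w, ¬G.Adj v w) :
    (G.connectedComponentMk v).supp = {v} := by
  ext w
  rw [mem_supp_iff, ConnectedComponent.eq, Set.mem_singleton_iff]
  refine ⟨fun hwv => ?_, fun h => h ▸ Reachable.refl _⟩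
  by_contra hne
  obtain ⟨x, hx⟩ := (mem_support G).mp (mem_support_of_reachable (Ne.symm hne) hwv.symm)
  exact hv x hx

lemma ConnectedComponent.exists_map_induceHomOfLE_eq {s t : Set V} (hts : t ⊆ s)
    (d : (G.induce s).ConnectedComponent) (hd : Subtype.val '' d.supp ⊆ t) :
    ∃ d' : (G.induce t).ConnectedComponent,
      d'.map (G.induceHomOfLE hts).toHom = d ∧ Subtype.val '' d'.supp = Subtype.val '' d.supp := by
  induction d using ConnectedComponent.ind with | h w => ?_
  have hwt : (w : V) ∈ t := hd ⟨w, rfl, rfl⟩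
  refine ⟨(G.induce t).connectedComponentMk ⟨w, hwt⟩, rfl, ?_⟩
  ext x
  simp only [Set.mem_image, mem_supp_iff, ConnectedComponent.eq]
  constructor
  · rintro ⟨y, hyw, rfl⟩
    exact ⟨G.induceHomOfLE hts y, hyw.map (G.induceHomOfLE hts).toHom, rfl⟩
  · rintro ⟨y, ⟨p⟩, rfl⟩
    have hsupp : ∀ z ∈ (p.map (Embedding.induce s).toHom).support, z ∈ t := by
      classical
      intro _ hz
      obtain ⟨z, hzp, rfl⟩ := List.mem_map.mp (Walk.support_map _ p ▸ hz)
      exact hd ⟨z, ConnectedComponent.eq.mpr ⟨p.dropUntil z hzp⟩, rfl⟩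
    exact ⟨_, ⟨(p.map (Embedding.induce s).toHom).induce t hsupp⟩, rfl⟩

lemma oddComp_induce_ne_oddComp_induce_diff_singleton [Finite V] {s : Set V} {v : V}
    (hv : v ∈ s) : oddComp (G.induce s) ≠ oddComp (G.induce (s \ {v})) := by
  intro h
  change (G.induce s).oddComponents.ncard = (G.induce (s \ {v})).oddComponents.ncard at h
  have hs := (G.induce s).odd_ncard_oddComponents
  have hsv := (G.induce (s \ {v})).odd_ncard_oddComponents
  rw [Nat.card_coe_set_eq] at hs hsv
  rw [← Set.ncard_sdiff_singleton_add_one hv, Nat.odd_add_one, ← hsv] at hs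
  exact iff_not_self (h ▸ hs)

lemma oddComp_lt_oddComp_induce_diff_singleton [Finite V] {s : Set V} {u v : s}
    (huv : (G.induce s).Adj u v) (hleaf : ∀ w, (G.induce s).Adj u w → w = v) :
    oddComp (G.induce s) < oddComp (G.induce (s \ {(v : V)})) := by
  set φ := ConnectedComponent.map
    (G.induceHomOfLE (Set.sdiff_subset (s := s) (t := {(v : V)}))).toHom
  have hu : (u : V) ∈ s \ {(v : V)} := ⟨u.2, fun h => huv.ne (Subtype.ext h)⟩
  set cu := (G.induce (s \ {(v : V)})).connectedComponentMk ⟨u, hu⟩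
  have hcu_odd : Odd cu.supp.ncard := by
    rw [ConnectedComponent.supp_eq_singleton_of_forall_not_adj, Set.ncard_singleton]
    · exact odd_one
    · exact fun w hw => w.2.2 (congrArg Subtype.val (hleaf ⟨w, w.2.1⟩ hw))
  have hcu_map : φ cu = (G.induce s).connectedComponentMk v :=
    ConnectedComponent.eq.mpr huv.reachable
  have hsub : (G.induce s).oddComponents ⊆ φ '' (G.induce (s \ {(v : V)})).oddComponents := by
    intro d hd
    by_cases hdv : d = (G.induce s).connectedComponentMk v
    · exact ⟨cu, hcu_odd, hcu_map.trans hdv.symm⟩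
    have hdt : Subtype.val '' d.supp ⊆ s \ {(v : V)} := by
      rintro _ ⟨x, hx, rfl⟩
      refine ⟨x.2, fun h => hdv ?_⟩
      rw [← (ConnectedComponent.mem_supp_iff _ _).mp hx, Subtype.ext h]
    obtain ⟨d', hmap, hsupp⟩ := d.exists_map_induceHomOfLE_eq Set.sdiff_subset hdt
    refine ⟨d', ?_, hmap⟩
    have hcard : d'.supp.ncard = d.supp.ncard := by
      rw [← Set.ncard_image_of_injective _ Subtype.val_injective, hsupp,
        Set.ncard_image_of_injective _ Subtype.val_injective]
    exact (congrArg Odd hcard).mpr hd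
  have hle : oddComp (G.induce s) ≤ oddComp (G.induce (s \ {(v : V)})) :=
    (Set.ncard_le_ncard hsub).trans Set.ncard_image_le
  exact lt_of_le_of_ne hle (oddComp_induce_ne_oddComp_induce_diff_singleton v.2)

lemma ConnectedComponent.exists_adj_forall_adj_eq_of_isTree [Finite V] (c : G.ConnectedComponent)
    (htree : (G.induce c.supp).IsTree) (hc : c.supp.ncard ≠ 1) :
    ∃ u v, G.Adj u v ∧ ∀ w, G.Adj u w → w = v := by
  classical
  cases nonempty_fintype V
  have : Nontrivial c.supp := by
    rw [Set.nontrivial_coe_sort, ← Set.one_lt_ncard_iff_nontrivial]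
    have := (Set.ncard_pos (Set.toFinite _)).mpr c.nonempty_supp
    omega
  obtain ⟨u, hu⟩ := htree.exists_vert_degree_one_of_nontrivial
  obtain ⟨v, huv, hv⟩ := degree_eq_one_iff_existsUnique_adj.mp hu
  refine ⟨u, v, huv, fun w hw => ?_⟩
  exact congrArg Subtype.val (hv ⟨w, (c.mem_supp_congr_adj hw).mp u.2⟩ hw)

end SimpleGraph

theorem stmt1_general {V : Type*} [Fintype V] (G : SimpleGraph V)
    (S : Set V)
    (hmin : ∀ T : Set V,
      (Fintype.card V : ℤ) + S.ncard - oddComp (G.induce (Sᶜ : Set V)) ≤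
      (Fintype.card V : ℤ) + T.ncard - oddComp (G.induce (Tᶜ : Set V)))
    (hmax : ∀ T : Set V,
      ((Fintype.card V : ℤ) + T.ncard - oddComp (G.induce (Tᶜ : Set V)) =
       (Fintype.card V : ℤ) + S.ncard - oddComp (G.induce (Sᶜ : Set V))) →
      T.ncard ≤ S.ncard) :
    ∀ c : (G.induce (Sᶜ : Set V)).ConnectedComponent,
      Odd c.supp.ncard → ((G.induce (Sᶜ : Set V)).induce c.supp).IsTree →
      c.supp.ncard = 1 := by
  intro c _ htree
  by_contra hc
  obtain ⟨u, v, huv, hleaf⟩ := c.exists_adj_forall_adj_eq_of_isTree htree hc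
  have hlt := SimpleGraph.oddComp_lt_oddComp_induce_diff_singleton huv hleaf
  have hcompl : (insert (v : V) S)ᶜ = Sᶜ \ {(v : V)} := by
    ext; simp [and_comm]
  have hcard : (insert (v : V) S).ncard = S.ncard + 1 := Set.ncard_insert_of_notMem v.2
  have hT := hmin (insert (v : V) S)
  rw [hcompl, hcard] at hT
  have := hmax (insert (v : V) S) (by rw [hcompl, hcard]; push_cast at hT ⊢; omega)
  omega

/-- if `S` is a maximum-cardinality set achieving the minimum in the
Tutte–Berge formula for a maximum matching `M` of `G`, then every odd component of
`G - S` which is a tree is a single vertex. -/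
theorem stmt1 {V : Type*} [Fintype V] (G : SimpleGraph V) (M : G.Subgraph)
    (hM : M.IsMatching)
    (hMmax : ∀ M' : G.Subgraph, M'.IsMatching → M'.edgeSet.ncard ≤ M.edgeSet.ncard)
    (S : Set V)
    (hwitness : 2 * (M.edgeSet.ncard : ℤ) =
      (Fintype.card V : ℤ) + S.ncard - oddComp (G.induce (Sᶜ : Set V)))
    (hmin : ∀ T : Set V,
      (Fintype.card V : ℤ) + S.ncard - oddComp (G.induce (Sᶜ : Set V)) ≤
      (Fintype.card V : ℤ) + T.ncard - oddComp (G.induce (Tᶜ : Set V)))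
    (hmax : ∀ T : Set V,
      ((Fintype.card V : ℤ) + T.ncard - oddComp (G.induce (Tᶜ : Set V)) =
       (Fintype.card V : ℤ) + S.ncard - oddComp (G.induce (Sᶜ : Set V))) →
      T.ncard ≤ S.ncard) :
    ∀ c : (G.induce (Sᶜ : Set V)).ConnectedComponent,
      Odd c.supp.ncard → ((G.induce (Sᶜ : Set V)).induce c.supp).IsTree →
      c.supp.ncard = 1 :=
  stmt1_general G S hmin hmax
end

section
/- For integers ℓ and m with 1 ≤ ℓ < m, the number of perfect matchings Φ(2k) = (2k)!/(k!·2^k) of a 2k-element set satisfies Φ(2m−2ℓ)·Φ(2ℓ)/Φ(2m) ≤ (ℓ/(2m−2ℓ))^ℓ. -/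
open Nat


/-- `Phi k` is the number of ways to partition a `2k`-element set into pairs. -/
def Phi (k : ℕ) : ℕ := (2 * k).factorial / (k.factorial * 2 ^ k)

lemma Phi_eq (k : ℕ) : Phi k = (2 * k - 1)‼ := by
  cases k with
  | zero => rfl
  | succ n =>
    have h : 2 * (n + 1) = (2 * n + 1) + 1 := by ring
    unfold Phi
    rw [h, Nat.factorial_eq_mul_doubleFactorial]
    have h2 : (2 * n + 1 + 1)‼ = (2 * (n+1))‼ := by ring_nf
    rw [h2, Nat.doubleFactorial_two_mul]
    rw [Nat.add_sub_cancel]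
    rw [mul_comm (2 ^ (n+1)) ((n+1)!), Nat.mul_div_cancel_left]
    positivity

lemma Phi_succ (k : ℕ) : Phi (k + 1) = (2 * k + 1) * Phi k := by
  rw [Phi_eq, Phi_eq]
  have h : 2 * (k + 1) - 1 = 2 * k + 1 := by omega
  rw [h, Nat.doubleFactorial_add_one]

lemma Phi_pos (k : ℕ) : 0 < Phi k := by
  rw [Phi_eq]; exact Nat.doubleFactorial_pos _

lemma bern (k : ℕ) (hk : 0 < k) : (2:ℝ) * (k:ℝ)^k ≤ ((k:ℝ)+1)^k := by
  have hkR : (0:ℝ) < k := by exact_mod_cast hk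
  have h1 : (1:ℝ) + k * (1/(k:ℝ)) ≤ (1 + 1/(k:ℝ)) ^ k :=
    one_add_mul_le_pow (by positivity |> le_of_lt |>.trans' (by norm_num) : (-2:ℝ) ≤ 1/(k:ℝ)) k
  have h2 : (1:ℝ) + k * (1/(k:ℝ)) = 2 := by rw [mul_one_div, div_self (ne_of_gt hkR)]; norm_num
  have h3 : ((1:ℝ) + 1/(k:ℝ)) ^ k * (k:ℝ)^k = ((k:ℝ)+1)^k := by
    rw [← mul_pow]; congr 1; field_simp
  calc (2:ℝ) * (k:ℝ)^k ≤ (1 + 1/(k:ℝ))^k * (k:ℝ)^k := by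
        rw [← h2]; exact mul_le_mul_of_nonneg_right h1 (by positivity)
    _ = ((k:ℝ)+1)^k := h3

lemma Phi_le_real (ℓ : ℕ) : (Phi ℓ : ℝ) ≤ (ℓ : ℝ) ^ ℓ := by
  induction ℓ with
  | zero => norm_num [Phi]
  | succ k ih =>
    rcases Nat.eq_zero_or_pos k with hk | hk
    · subst hk; norm_num [Phi_succ, Phi]
    · have hb := bern k hk
      have h1 : (Phi (k+1) : ℝ) = (2*k+1) * Phi k := by
        rw [Phi_succ]; push_cast; ring
      have h2 : ((2:ℝ)*k+1) * Phi k ≤ (2*k+2) * (k:ℝ)^k := by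
        have := Phi_pos k
        have hp : (0:ℝ) < Phi k := by exact_mod_cast this
        nlinarith [pow_nonneg (Nat.cast_nonneg k : (0:ℝ) ≤ k) k]
      have h3 : ((2:ℝ)*k+2) * (k:ℝ)^k = ((k:ℝ)+1) * (2 * (k:ℝ)^k) := by ring
      have h4 : ((k:ℝ)+1) * (2 * (k:ℝ)^k) ≤ ((k:ℝ)+1) * ((k:ℝ)+1)^k :=
        mul_le_mul_of_nonneg_left hb (by positivity)
      push_cast
      calc ((Phi (k+1) : ℝ)) = (2*k+1) * Phi k := h1
        _ ≤ (2*k+2) * (k:ℝ)^k := h2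
        _ = ((k:ℝ)+1) * (2 * (k:ℝ)^k) := h3
        _ ≤ ((k:ℝ)+1) * ((k:ℝ)+1)^k := h4
        _ = ((k:ℝ)+1)^(k+1) := by rw [pow_succ]; ring

lemma Phi_grow (n j : ℕ) : Phi n * (2*n)^j ≤ Phi (n + j) := by
  induction j with
  | zero => simp
  | succ k ih =>
    have h : n + (k+1) = (n+k) + 1 := by omega
    rw [h, Phi_succ, pow_succ]
    calc Phi n * ((2*n)^k * (2*n)) = (2*n) * (Phi n * (2*n)^k) := by ring
      _ ≤ (2*(n+k)+1) * Phi (n+k) := Nat.mul_le_mul (by omega) ih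


/-- `Φ(2m-2ℓ)·Φ(2ℓ)/Φ(2m) ≤ (ℓ/(2m-2ℓ))^ℓ` for `1 ≤ ℓ < m`. -/
theorem stmt3 (ℓ m : ℕ) (h1 : 1 ≤ ℓ) (h2 : ℓ < m) :
    ((Phi (m - ℓ) : ℝ) * Phi ℓ) / Phi m ≤ ((ℓ : ℝ) / (2 * m - 2 * ℓ)) ^ ℓ := by
  set n := m - ℓ with hn
  have hm : m = n + ℓ := by omega
  have hn1 : 1 ≤ n := by omega
  have hgrow : (Phi n : ℝ) * (2*(n:ℝ))^ℓ ≤ Phi m := by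
    have := Phi_grow n ℓ
    rw [← hm] at this
    exact_mod_cast this
  have h2n : (2:ℝ) * m - 2 * ℓ = 2 * n := by
    have : (m:ℝ) = n + ℓ := by exact_mod_cast hm
    rw [this]; ring
  rw [h2n, div_pow]
  have hmpos : (0:ℝ) < Phi m := by exact_mod_cast Phi_pos m
  have hnpos : (0:ℝ) < Phi n := by exact_mod_cast Phi_pos n
  have h2npos : (0:ℝ) < (2*(n:ℝ))^ℓ := by positivity
  rw [div_le_div_iff₀ hmpos h2npos]
  calc (Phi n : ℝ) * Phi ℓ * (2*(n:ℝ))^ℓ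
      = (Phi ℓ : ℝ) * ((Phi n : ℝ) * (2*(n:ℝ))^ℓ) := by ring
    _ ≤ (ℓ:ℝ)^ℓ * Phi m :=
        mul_le_mul (Phi_le_real ℓ) hgrow (by positivity) (by positivity)
end

section
/- Let λ > 0 and k ≥ 1, and let Y be a truncated-at-k Poisson(λ) random variable, i.e. P(Y = t) = λ^t/(t! f_k(λ)) for t ≥ k, where f_k(λ) = e^λ − Σ_{i=0}^{k−1} λ^i/i!. Then for every integer i ≥ 0, P(Y ≥ 2(λ+k) + i) ≤ 2^{−i}. -/
/-!
Write `a t = λ^t / t!`. Since `a (t+1) = a t · λ/(t+1)`, the terms at least halve at each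
step once `t + 1 ≥ 2λ`, so a tail of the exponential series starting there is at most twice
its first term. Let `N = ⌈2(λ+k)+i⌉` and `p = N - i - 1 ≥ k`; then the numerator
`∑_{t ≥ N} a t ≤ 2 a N ≤ 2^{-i} a p`, while the normaliser `f_k(λ) = ∑_{t ≥ k} a t ≥ a p`.
-/

/-- `fTrunc k λ = e^λ - ∑_{i<k} λ^i/i!`, the normalizer of the truncated Poisson. -/
noncomputable def fTrunc (k : ℕ) (lam : ℝ) : ℝ :=
  Real.exp lam - ∑ i ∈ Finset.range k, lam ^ i / (Nat.factorial i)

theorem tsum_ite_le_eq_tsum_add {α : Type*} [AddCommMonoid α] [TopologicalSpace α]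
    (f : ℕ → α) (N : ℕ) : ∑' t, (if N ≤ t then f t else 0) = ∑' j, f (N + j) := by
  rw [← (add_right_injective N).tsum_eq]
  · exact tsum_congr fun j => if_pos (Nat.le_add_right N j)
  · intro t ht
    exact ⟨t - N, Nat.add_sub_of_le (by_contra fun h => ht (if_neg h))⟩

theorem fTrunc_eq_tsum (k : ℕ) (lam : ℝ) :
    fTrunc k lam = ∑' j : ℕ, lam ^ (j + k) / (j + k).factorial := by
  rw [fTrunc, Real.exp_eq_exp_ℝ, NormedSpace.exp_eq_tsum_div]
  beta_reduce
  rw [← (Real.summable_pow_div_factorial lam).sum_add_tsum_nat_add k, add_sub_cancel_left]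

theorem pow_div_factorial_le_fTrunc {lam : ℝ} (hlam : 0 ≤ lam) {k p : ℕ} (hkp : k ≤ p) :
    lam ^ p / p.factorial ≤ fTrunc k lam := by
  rw [fTrunc_eq_tsum]
  have hsum := (summable_nat_add_iff k).mpr (Real.summable_pow_div_factorial lam)
  simpa [Nat.sub_add_cancel hkp] using hsum.le_tsum (p - k) (fun j _ => by positivity)

theorem pow_div_factorial_succ_le_half {lam : ℝ} (hlam : 0 ≤ lam) {n : ℕ}
    (hn : 2 * lam ≤ n + 1) :
    lam ^ (n + 1) / (n + 1).factorial ≤ lam ^ n / n.factorial * (1 / 2) := by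
  have hratio : lam / (n + 1) ≤ 1 / 2 := by
    rw [div_le_div_iff₀ (by positivity) (by norm_num)]; linarith
  calc lam ^ (n + 1) / (n + 1).factorial = lam ^ n / n.factorial * (lam / (n + 1)) := by
        rw [Nat.factorial_succ, pow_succ]; push_cast; field_simp
    _ ≤ lam ^ n / n.factorial * (1 / 2) := by gcongr

theorem pow_div_factorial_add_le {lam : ℝ} (hlam : 0 ≤ lam) {m : ℕ} (hm : 2 * lam ≤ m + 1)
    (j : ℕ) : lam ^ (m + j) / (m + j).factorial ≤ lam ^ m / m.factorial * (1 / 2) ^ j := by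
  induction j with
  | zero => simp
  | succ j ih =>
    have hstep : 2 * lam ≤ ((m + j : ℕ) : ℝ) + 1 := by
      push_cast; linarith [j.cast_nonneg (α := ℝ)]
    calc lam ^ (m + j + 1) / (m + j + 1).factorial
        ≤ lam ^ (m + j) / (m + j).factorial * (1 / 2) := pow_div_factorial_succ_le_half hlam hstep
      _ ≤ lam ^ m / m.factorial * (1 / 2) ^ j * (1 / 2) := by gcongr
      _ = lam ^ m / m.factorial * (1 / 2) ^ (j + 1) := by ring

theorem tsum_pow_div_factorial_add_le {lam : ℝ} (hlam : 0 ≤ lam) {m : ℕ}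
    (hm : 2 * lam ≤ m + 1) :
    ∑' j : ℕ, lam ^ (m + j) / (m + j).factorial ≤ 2 * (lam ^ m / m.factorial) := by
  have hsum : Summable fun j => lam ^ (m + j) / (m + j).factorial := by
    simpa only [add_comm m] using
      (summable_nat_add_iff m).mpr (Real.summable_pow_div_factorial lam)
  calc ∑' j : ℕ, lam ^ (m + j) / (m + j).factorial
      ≤ ∑' j : ℕ, lam ^ m / m.factorial * (1 / 2) ^ j :=
        hsum.tsum_le_tsum (pow_div_factorial_add_le hlam hm) (summable_geometric_two.mul_left _)
    _ = 2 * (lam ^ m / m.factorial) := by rw [tsum_mul_left, tsum_geometric_two, mul_comm]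

theorem tsum_pow_div_factorial_tail_le {lam : ℝ} (hlam : 0 ≤ lam) {p : ℕ}
    (hp : 2 * lam ≤ p + 1) (i : ℕ) :
    ∑' j : ℕ, lam ^ (p + 1 + i + j) / (p + 1 + i + j).factorial
      ≤ (1 / 2) ^ i * (lam ^ p / p.factorial) := by
  have hN : 2 * lam ≤ ((p + 1 + i : ℕ) : ℝ) + 1 := by
    push_cast; linarith [i.cast_nonneg (α := ℝ)]
  calc ∑' j : ℕ, lam ^ (p + 1 + i + j) / (p + 1 + i + j).factorial
      ≤ 2 * (lam ^ (p + 1 + i) / (p + 1 + i).factorial) := tsum_pow_div_factorial_add_le hlam hN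
    _ ≤ 2 * (lam ^ p / p.factorial * (1 / 2) ^ (1 + i)) := by
        rw [add_assoc]; gcongr; exact pow_div_factorial_add_le hlam hp _
    _ = (1 / 2) ^ i * (lam ^ p / p.factorial) := by ring

theorem exists_tail_index {lam : ℝ} (hlam : 0 < lam) (k i : ℕ) :
    ∃ p : ℕ, k ≤ p ∧ 2 * lam ≤ p + 1 ∧
      ∀ t : ℕ, (k ≤ t ∧ 2 * (lam + k) + i ≤ (t : ℝ)) ↔ p + 1 + i ≤ t := by
  set N := ⌈2 * (lam + k) + i⌉₊
  have hN : 2 * (lam + k) + i ≤ (N : ℝ) := Nat.le_ceil _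
  have hkN : k + k + i < N := by
    have : ((k + k + i : ℕ) : ℝ) < N := by push_cast; linarith
    exact_mod_cast this
  refine ⟨N - 1 - i, by omega, ?_, fun t => ?_⟩
  · have : ((N - 1 - i : ℕ) : ℝ) + 1 = N - i := by
      rw [Nat.cast_sub (by omega), Nat.cast_sub (by omega)]; push_cast; ring
    rw [this]; linarith [k.cast_nonneg (α := ℝ)]
  · rw [show N - 1 - i + 1 + i = N by omega]
    refine ⟨fun h => Nat.ceil_le.mpr h.2, fun h => ?_⟩
    have hNt : (N : ℝ) ≤ t := by exact_mod_cast h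
    exact ⟨by omega, hN.trans hNt⟩

theorem stmt5_general (k : ℕ) (lam : ℝ) (hlam : 0 < lam) (i : ℕ) :
    (∑' t : ℕ, if k ≤ t ∧ 2 * (lam + k) + i ≤ (t : ℝ) then
        lam ^ t / (Nat.factorial t * fTrunc k lam) else 0)
      ≤ (1 / 2 : ℝ) ^ i := by
  obtain ⟨p, hkp, hp, hcond⟩ := exists_tail_index hlam k i
  have hf : lam ^ p / p.factorial ≤ fTrunc k lam := pow_div_factorial_le_fTrunc hlam.le hkp
  have hfpos : 0 < fTrunc k lam := lt_of_lt_of_le (by positivity) hf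
  have hterm (t : ℕ) : (if k ≤ t ∧ 2 * (lam + k) + i ≤ (t : ℝ) then
      lam ^ t / (t.factorial * fTrunc k lam) else 0)
      = (if p + 1 + i ≤ t then lam ^ t / t.factorial else 0) / fTrunc k lam := by
    rw [if_congr (hcond t) rfl rfl]; split_ifs <;> simp [div_div]
  rw [tsum_congr hterm, tsum_div_const, tsum_ite_le_eq_tsum_add, div_le_iff₀ hfpos]
  calc ∑' j : ℕ, lam ^ (p + 1 + i + j) / (p + 1 + i + j).factorial
      ≤ (1 / 2) ^ i * (lam ^ p / p.factorial) := tsum_pow_div_factorial_tail_le hlam.le hp i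
    _ ≤ (1 / 2) ^ i * fTrunc k lam := by gcongr

/-- for a truncated-at-`k` Poisson(`λ`) variable `Y`,
`P(Y ≥ 2(λ+k)+i) ≤ 2^{-i}` for every `i ≥ 0`. -/
theorem stmt5 (k : ℕ) (hk : 1 ≤ k) (lam : ℝ) (hlam : 0 < lam) (i : ℕ) :
    (∑' t : ℕ, if k ≤ t ∧ 2 * (lam + k) + i ≤ (t : ℝ) then
        lam ^ t / (Nat.factorial t * fTrunc k lam) else 0)
      ≤ (1 / 2 : ℝ) ^ i :=
  stmt5_general k lam hlam i
end
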